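/- Let D and K be symmetric positive definite real n×n matrices. Then the 2n×2n real block matrix A = fromBlocks 0 I (−K) (−D) (upper-left block zero, upper-right block the n×n identity, lower-left block −K, lower-right block −D) is Hurwitz: every eigenvalue λ ∈ ℂ of A (i.e., every root of the characteristic polynomial of A over ℂ) has strictly negative real part. -/

import Mathlib

/-!
An eigenvector of `A` has the form `(x, μ • x)` with `x ≠ 0` and `(μ² + μ D + K) x = 0`.
Pairing with `x` gives `μ² ⟨x, x⟩ + μ ⟨x, D x⟩ + ⟨x, K x⟩ = 0`, and since the complexifications
of `D` and `K` are still positive definite, all three coefficients are positive reals.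
A root of a real quadratic with positive coefficients has negative real part.
-/

open Matrix
open scoped ComplexOrder

theorem Complex.re_neg_of_mul_sq_add_mul_add_eq_zero {a b c z : ℂ} (ha : 0 < a) (hb : 0 < b)
    (hc : 0 < c) (h : a * z ^ 2 + b * z + c = 0) : z.re < 0 := by
  rw [Complex.pos_iff] at ha hb hc
  have hre := congrArg Complex.re h
  have him := congrArg Complex.im h
  simp only [Complex.add_re, Complex.add_im, Complex.mul_re, Complex.mul_im, sq,
    ← ha.2, ← hb.2, ← hc.2, Complex.zero_re, Complex.zero_im] at hre him
  by_contra! hz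
  have hzim : z.im = 0 := by
    have : z.im * (2 * a.re * z.re + b.re) = 0 := by linear_combination him
    exact (mul_eq_zero.mp this).resolve_right (by nlinarith)
  rw [hzim] at hre
  nlinarith [mul_nonneg ha.1.le (mul_nonneg hz hz), mul_nonneg hb.1.le hz]

namespace Matrix

variable {m : Type*} [Fintype m]

theorem exists_mulVec_eq_smul_of_isRoot_charpoly [DecidableEq m] {R : Type*} [CommRing R]
    [IsDomain R] {M : Matrix m m R} {μ : R} (h : M.charpoly.IsRoot μ) :
    ∃ v ≠ 0, M *ᵥ v = μ • v := by
  rw [← charpoly_toLin', ← Module.End.hasEigenvalue_iff_isRoot_charpoly] at h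
  obtain ⟨v, hv⟩ := h.exists_hasEigenvector
  exact ⟨v, hv.2, by simpa using hv.apply_eq_smul⟩

theorem fromBlocks_companion_mulVec_eq_smul_iff [DecidableEq m] {R : Type*} [CommRing R]
    {K D : Matrix m m R} {x y : m → R} {μ : R} :
    fromBlocks 0 1 (-K) (-D) *ᵥ Sum.elim x y = μ • Sum.elim x y ↔
      y = μ • x ∧ μ ^ 2 • x + μ • (D *ᵥ x) + K *ᵥ x = 0 := by
  have hsmul : μ • Sum.elim x y = Sum.elim (μ • x) (μ • y) := by ext (i | i) <;> rfl
  rw [fromBlocks_mulVec, hsmul, Sum.elim_eq_iff]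
  simp only [Sum.elim_comp_inl, Sum.elim_comp_inr, zero_mulVec, one_mulVec, zero_add, neg_mulVec]
  constructor
  · rintro ⟨rfl, h⟩
    refine ⟨rfl, ?_⟩
    rw [mulVec_smul] at h
    rw [pow_two, mul_smul, ← h]
    abel
  · rintro ⟨rfl, h⟩
    refine ⟨rfl, ?_⟩
    rw [mulVec_smul, ← mul_smul, ← pow_two, ← sub_eq_zero, ← neg_eq_zero, ← h]
    abel

theorem map_dotProduct_map_mulVec {n R S : Type*} [Fintype n] [NonAssocSemiring R]
    [NonAssocSemiring S] (f : R →+* S) (M : Matrix m n R) (u : m → R) (w : n → R) :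
    f ∘ u ⬝ᵥ (M.map f *ᵥ f ∘ w) = f (u ⬝ᵥ M *ᵥ w) := by
  rw [RingHom.map_dotProduct]
  congr 1
  ext i
  exact (RingHom.map_mulVec _ _ _ _).symm

theorem IsSymm.star_dotProduct_map_ofReal_mulVec {S : Matrix m m ℝ} (hS : S.IsSymm) (x : m → ℂ) :
    star x ⬝ᵥ (S.map (algebraMap ℝ ℂ) *ᵥ x) = algebraMap ℝ ℂ
      ((Complex.re ∘ x) ⬝ᵥ S *ᵥ (Complex.re ∘ x) + (Complex.im ∘ x) ⬝ᵥ S *ᵥ (Complex.im ∘ x)) := by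
  set a := Complex.re ∘ x
  set b := Complex.im ∘ x
  have hx : x = algebraMap ℝ ℂ ∘ a + Complex.I • algebraMap ℝ ℂ ∘ b := by
    funext i; apply Complex.ext <;> simp [a, b]
  have hstar : star x = algebraMap ℝ ℂ ∘ a - Complex.I • algebraMap ℝ ℂ ∘ b := by
    funext i; apply Complex.ext <;> simp [a, b]
  have hcross : b ⬝ᵥ S *ᵥ a = a ⬝ᵥ S *ᵥ b := by
    rw [dotProduct_mulVec, ← mulVec_transpose, hS.eq, dotProduct_comm]
  conv_lhs => rw [hstar, hx]
  simp only [mulVec_add, mulVec_smul, sub_dotProduct, dotProduct_add, smul_dotProduct,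
    dotProduct_smul, map_dotProduct_map_mulVec, hcross, map_add, smul_eq_mul]
  linear_combination -(algebraMap ℝ ℂ (b ⬝ᵥ S *ᵥ b)) * Complex.I_sq

theorem PosDef.map_ofReal {S : Matrix m m ℝ} (hS : S.PosDef) :
    (S.map (algebraMap ℝ ℂ)).PosDef := by
  refine .of_dotProduct_mulVec_pos (hS.isHermitian.map _ fun r ↦ by simp) fun x hx ↦ ?_
  rw [(isHermitian_iff_isSymm.mp hS.isHermitian).star_dotProduct_map_ofReal_mulVec,
    Complex.coe_algebraMap, Complex.zero_lt_real]
  have hre_im : Complex.re ∘ x ≠ 0 ∨ Complex.im ∘ x ≠ 0 := by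
    contrapose! hx
    funext i
    exact Complex.ext (congrFun hx.1 i) (congrFun hx.2 i)
  rcases hre_im with h | h
  · exact add_pos_of_pos_of_nonneg (hS.dotProduct_mulVec_pos h)
      (hS.posSemidef.dotProduct_mulVec_nonneg _)
  · exact add_pos_of_nonneg_of_pos (hS.posSemidef.dotProduct_mulVec_nonneg _)
      (hS.dotProduct_mulVec_pos h)

end Matrix

theorem companion_matrix_hurwitz_general
    (n : ℕ)
    (D K : Matrix (Fin n) (Fin n) ℝ)
    (hDpd : D.PosDef)
    (hKpd : K.PosDef)
    (A : Matrix (Fin n ⊕ Fin n) (Fin n ⊕ Fin n) ℝ)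
    (hA : A = Matrix.fromBlocks (0 : Matrix (Fin n) (Fin n) ℝ)
      (1 : Matrix (Fin n) (Fin n) ℝ) (-K) (-D)) :
    ∀ μ : ℂ, (A.map (algebraMap ℝ ℂ)).charpoly.IsRoot μ → μ.re < 0 := by
  intro μ hμ
  have hAℂ : A.map (algebraMap ℝ ℂ) =
      fromBlocks 0 1 (-K.map (algebraMap ℝ ℂ)) (-D.map (algebraMap ℝ ℂ)) := by
    simp [hA, fromBlocks_map, Matrix.map_neg]
  obtain ⟨v, hv0, hv⟩ := exists_mulVec_eq_smul_of_isRoot_charpoly hμ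
  obtain ⟨x, y, rfl⟩ : ∃ x y, v = Sum.elim x y := ⟨_, _, (Sum.elim_comp_inl_inr v).symm⟩
  rw [hAℂ] at hv
  obtain ⟨rfl, hquad⟩ := fromBlocks_companion_mulVec_eq_smul_iff.mp hv
  have hx0 : x ≠ 0 := by
    rintro rfl
    exact hv0 (by rw [smul_zero, Sum.elim_zero_zero])
  apply Complex.re_neg_of_mul_sq_add_mul_add_eq_zero (dotProduct_star_self_pos_iff.mpr hx0)
    (hDpd.map_ofReal.dotProduct_mulVec_pos hx0) (hKpd.map_ofReal.dotProduct_mulVec_pos hx0)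
  simpa [dotProduct_add, dotProduct_smul, mul_comm] using congrArg (star x ⬝ᵥ ·) hquad

/-- **The companion matrix of `ẍ = −D ẋ − K x` is Hurwitz.**
If `D` and `K` are symmetric positive definite real `n×n` matrices, then every
eigenvalue `μ ∈ ℂ` of the block matrix `A = fromBlocks 0 I (−K) (−D)` (every root
of its characteristic polynomial over `ℂ`) has strictly negative real part. -/
theorem companion_matrix_hurwitz
    (n : ℕ)
    (D K : Matrix (Fin n) (Fin n) ℝ)
    (hDsymm : D.IsSymm) (hDpd : D.PosDef)
    (hKsymm : K.IsSymm) (hKpd : K.PosDef)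
    (A : Matrix (Fin n ⊕ Fin n) (Fin n ⊕ Fin n) ℝ)
    (hA : A = Matrix.fromBlocks (0 : Matrix (Fin n) (Fin n) ℝ)
      (1 : Matrix (Fin n) (Fin n) ℝ) (-K) (-D)) :
    ∀ μ : ℂ, (A.map (algebraMap ℝ ℂ)).charpoly.IsRoot μ → μ.re < 0 :=
  companion_matrix_hurwitz_general n D K hDpd hKpd A hA
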